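/- For any nonzero quaternion q with zero real part, the real bilinear form B on ℍ defined by B(u,v) = re(conj(q) · (conj(u)·v − conj(v)·u)) is skew-symmetric and nondegenerate. -/

import Mathlib

/-!
Skew-symmetry is immediate. For nondegeneracy, pair `u` with `u * q`: since
`conj(u) u = |u|²` is real, `B(u, u q) = |u|² re(conj(q) (q - conj(q)))`, and for imaginary `q`
this is `2 |u|² |q|²`, which vanishes only when `u = 0`.
-/

namespace Quaternion

variable {R : Type*}

theorem star_mul_mul_sub_star_mul_mul [CommRing R] (u q : ℍ[R]) :
    star u * (u * q) - star (u * q) * u = normSq u • (q - star q) := by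
  rw [star_mul, mul_assoc, ← mul_assoc, star_mul_self, coe_mul_eq_smul, ← coe_commutes,
    coe_mul_eq_smul, smul_sub]

theorem re_star_mul_sub_star_of_re_eq_zero [CommRing R] [LinearOrder R] [IsStrictOrderedRing R]
    {q : ℍ[R]} (hq : q.re = 0) : (star q * (q - star q)).re = 2 * normSq q := by
  rw [star_eq_neg.mpr hq, sub_neg_eq_add, mul_add, ← star_eq_neg.mpr hq, star_mul_self]
  simp [two_mul]

theorem re_star_mul_star_mul_mul_sub_of_re_eq_zero [CommRing R] [LinearOrder R]
    [IsStrictOrderedRing R] {q : ℍ[R]} (hq : q.re = 0) (u : ℍ[R]) :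
    (star q * (star u * (u * q) - star (u * q) * u)).re = 2 * normSq u * normSq q := by
  rw [star_mul_mul_sub_star_mul_mul, mul_smul_comm, re_smul, re_star_mul_sub_star_of_re_eq_zero hq,
    smul_eq_mul]
  ring

end Quaternion

/-- For a nonzero imaginary quaternion `q`, the real bilinear form
`B(u,v) = re(conj(q) * (conj(u) v − conj(v) u))` on `ℍ` is skew-symmetric and
nondegenerate. -/
theorem imaginary_quaternion_symplectic_form (q : Quaternion ℝ) (hq : q ≠ 0)
    (hre : q.re = 0) :
    (∀ u v : Quaternion ℝ,
        (star q * (star u * v - star v * u)).re = -((star q * (star v * u - star u * v)).re)) ∧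
    (∀ u : Quaternion ℝ, (∀ v : Quaternion ℝ, (star q * (star u * v - star v * u)).re = 0)
        → u = 0) := by
  refine ⟨fun u v => by rw [← neg_sub, mul_neg, Quaternion.re_neg], fun u hu => ?_⟩
  have h := hu (u * q)
  rw [Quaternion.re_star_mul_star_mul_mul_sub_of_re_eq_zero hre] at h
  simpa [Quaternion.normSq_eq_zero, hq] using h
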